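/- In the setting of the previous statement, define ξ : Hom(M(X), M(Y)) → (free reduced R-module on pointed functions X → Y) as follows. Fix a linear order on X∖{*}. For nonempty subsets F ⊆ E ⊆ X∖{*} with E = {x₁ < ⋯ < x_s}, let κ_E = [x₁∧⋯∧x_s] ∈ M(X)(⟨s⟩), and let Φ_E^F send [y₁∧⋯∧y_s] to the class of the function mapping x_t ↦ y_t for x_t ∈ F and all other points of X to the basepoint. Set ξ(T) = Σ_{∅ ≠ F ⊆ E ⊆ X∖{*}} (−1)^{|E|−|F|} Φ_E^F(T_{⟨|E|⟩}(κ_E)). Then ξ ∘ ε = id, where ε([v])_s([x₁∧⋯∧x_s]) = [v(x₁)∧⋯∧v(x_s)]. -/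

import Mathlib

/-!  Ω is the category of nonempty finite sets ⟨s⟩ = {1,…,s} (encoded here as
`Fin (s+1)`, s : ℕ, so that every object is nonempty) with surjections as
morphisms.  An `OmegaFunctor R` is a functor Ωᵒᵖ → Mod R. -/

structure OmegaFunctor (R : Type) [CommRing R] where
  obj : ℕ → Type
  [acg : ∀ s, AddCommGroup (obj s)]
  [mod : ∀ s, Module R (obj s)]
  map : ∀ {s t : ℕ} (h : Fin (t + 1) → Fin (s + 1)),
    Function.Surjective h → (obj s →ₗ[R] obj t)
  map_id : ∀ s : ℕ, map (s := s) id Function.surjective_id = LinearMap.id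
  map_comp : ∀ {s t u : ℕ} (h : Fin (t + 1) → Fin (s + 1)) (hh : Function.Surjective h)
    (k : Fin (u + 1) → Fin (t + 1)) (hk : Function.Surjective k),
    map (h ∘ k) (hh.comp hk) = (map k hk).comp (map h hh)

attribute [instance] OmegaFunctor.acg OmegaFunctor.mod

/-- Natural transformations F → G, as a submodule of the product of the Hom modules. -/
def OmegaFunctor.Nat {R : Type} [CommRing R] (F G : OmegaFunctor R) :
    Submodule R (∀ s : ℕ, F.obj s →ₗ[R] G.obj s) where
  carrier := {T | ∀ {s t : ℕ} (h : Fin (t + 1) → Fin (s + 1)) (hs : Function.Surjective h),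
    (G.map h hs).comp (T s) = (T t).comp (F.map h hs)}
  add_mem' := by
    intro a b ha hb s t h hs
    simp only [Pi.add_apply, LinearMap.comp_add, LinearMap.add_comp, ha h hs, hb h hs]
  zero_mem' := by
    intro s t h hs
    simp
  smul_mem' := by
    intro c a ha s t h hs
    simp only [Pi.smul_apply, LinearMap.comp_smul, LinearMap.smul_comp, ha h hs]

/-- The smash-power functor `M(S)` of a pointed set `(S, pt)`:
`M(S)(⟨s⟩)` is the free reduced `R`-module on the smash power `S^∧s`, whose basis is
the set of `s`-tuples of non-basepoint elements of `S`; a surjection `h : ⟨t⟩ → ⟨s⟩`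
acts by precomposition on coordinates. -/
noncomputable def Mfun (R : Type) [CommRing R] (S : Type) (pt : S) : OmegaFunctor R where
  obj s := (Fin (s + 1) → {x : S // x ≠ pt}) →₀ R
  map h _ := Finsupp.lmapDomain R R (fun x => x ∘ h)
  map_id s := by
    exact Finsupp.lmapDomain_id R R
  map_comp h hh k hk := by
    exact Finsupp.lmapDomain_comp R R (fun x => x ∘ h) (fun x => x ∘ k)

open scoped Classical
set_option linter.unusedSectionVars false

/-- Non-basepoint basepoint-preserving functions `(X,px) → (Y,py)`: the basis of
the free reduced `R`-module on the pointed set of pointed functions `X → Y`. -/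
def PFunB (X Y : Type) (px : X) (py : Y) : Type :=
  {v : X → Y // v px = py ∧ ∃ x, v x ≠ py}

section Xi

variable (R : Type) [CommRing R] (X Y : Type) [Fintype X] [DecidableEq X]
  (px : X) (py : Y) [LinearOrder {x : X // x ≠ px}]

/-- For a nonempty `E ⊆ X ∖ {*}`, `|E| = |E| - 1 + 1`. -/
theorem card_eq (E : Finset {x : X // x ≠ px}) (hE : E.Nonempty) :
    E.card = E.card - 1 + 1 :=
  (Nat.succ_pred_eq_of_pos (Finset.card_pos.mpr hE)).symm

/-- `κ_E = [x₁ ∧ ⋯ ∧ x_s] ∈ M(X)(⟨s⟩)` for `E = {x₁ < ⋯ < x_s} ⊆ X ∖ {*}`. -/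
noncomputable def kappa (E : Finset {x : X // x ≠ px}) (hE : E.Nonempty) :
    (Mfun R X px).obj (E.card - 1) :=
  Finsupp.single (fun t => (E.orderIsoOfFin (card_eq X px E hE) t).1) 1

/-- The underlying function of `Φ_E^F [y₁ ∧ ⋯ ∧ y_s]`: it sends the `t`-th element
of `E` to `y_t` when that element lies in `F`, and everything else to the
basepoint. -/
noncomputable def phiFun (E F : Finset {x : X // x ≠ px}) (hF : F.Nonempty)
    (hFE : F ⊆ E) (y : Fin (E.card - 1 + 1) → {y : Y // y ≠ py}) : X → Y :=
  fun x =>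
    if h : ∃ hx : x ≠ px, (⟨x, hx⟩ : {x : X // x ≠ px}) ∈ F then
      (y ((E.orderIsoOfFin (card_eq X px E (hF.mono hFE))).symm
        ⟨⟨x, h.choose⟩, hFE h.choose_spec⟩)).1
    else py

theorem phiFun_pointed (E F : Finset {x : X // x ≠ px}) (hF : F.Nonempty)
    (hFE : F ⊆ E) (y : Fin (E.card - 1 + 1) → {y : Y // y ≠ py}) :
    phiFun X Y px py E F hF hFE y px = py ∧
      ∃ x, phiFun X Y px py E F hF hFE y x ≠ py := by
  constructor
  · rw [phiFun, dif_neg]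
    rintro ⟨hx, -⟩
    exact hx rfl
  · refine ⟨hF.choose.1, ?_⟩
    rw [phiFun, dif_pos ⟨hF.choose.2, by simpa using hF.choose_spec⟩]
    exact (y _).2

/-- `Φ_E^F`, extended linearly from the basis of `M(Y)(⟨|E|⟩)`. -/
noncomputable def Phi (E F : Finset {x : X // x ≠ px}) (hF : F.Nonempty)
    (hFE : F ⊆ E) :
    (Mfun R Y py).obj (E.card - 1) →ₗ[R] (PFunB X Y px py →₀ R) :=
  Finsupp.lift _ R _
    (fun y => Finsupp.single
      (⟨phiFun X Y px py E F hF hFE y, phiFun_pointed X Y px py E F hF hFE y⟩ :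
        PFunB X Y px py) 1)

/-- The Bendersky–Gitler-style map
`ξ(T) = Σ_{∅ ≠ F ⊆ E ⊆ X∖{*}} (−1)^{|E|−|F|} Φ_E^F(T_{⟨|E|⟩}(κ_E))`. -/
noncomputable def xi (T : ((Mfun R X px).Nat (Mfun R Y py))) :
    PFunB X Y px py →₀ R :=
  ∑ E : Finset {x : X // x ≠ px}, ∑ F : Finset {x : X // x ≠ px},
    if h : F.Nonempty ∧ F ⊆ E then
      ((-1 : ℤ) ^ (E.card - F.card)) •
        (Phi R X Y px py E F h.1 h.2)
          (T.1 (E.card - 1) (kappa R X px E (h.1.mono h.2)))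
    else 0

end Xi

/-! Evaluated at `κ_E`, `ε[v]` is `[v(x₁) ∧ ⋯ ∧ v(xₛ)]` when `E` lies in the support `S` of `v`
and `0` otherwise, and `Φ_E^F` sends `[v(x₁) ∧ ⋯ ∧ v(xₛ)]` to the class of the restriction `v|_F`.
Hence `ξ(ε[v]) = Σ_{F ⊆ S} (Σ_{F ⊆ E ⊆ S} (-1)^{|E|-|F|}) [v|_F]`; the inner alternating sum over
the Boolean interval `[F, S]` vanishes unless `F = S`, which leaves `[v|_S] = [v]`. Since `ξ` is
linear, checking `ξ ∘ ε` on the basis suffices. -/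

theorem Finset.sum_Icc_neg_one_pow_card_sub {α : Type*} [DecidableEq α] (F S : Finset α) :
    ∑ E ∈ Finset.Icc F S, (-1 : ℤ) ^ (E.card - F.card) = if F = S then 1 else 0 := by
  by_cases hFS : F ⊆ S
  · have hdisj : ∀ D ∈ (S \ F).powerset, Disjoint F D := fun D hD =>
      Finset.disjoint_of_subset_right (Finset.mem_powerset.1 hD) Finset.disjoint_sdiff
    rw [Finset.Icc_eq_image_powerset hFS, Finset.sum_image, Finset.sum_congr rfl fun D hD => by
        rw [Finset.card_union_of_disjoint (hdisj D hD), Nat.add_sub_cancel_left],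
      Finset.sum_powerset_neg_one_pow_card]
    · refine if_congr ?_ rfl rfl
      rw [Finset.sdiff_eq_empty_iff_subset]
      exact ⟨hFS.antisymm, fun h => h ▸ subset_rfl⟩
    · intro D hD D' hD' h
      rw [← Finset.union_sdiff_cancel_left (hdisj D hD),
        ← Finset.union_sdiff_cancel_left (hdisj D' hD')]
      exact congrArg (· \ F) h
  · rw [Finset.Icc_eq_empty hFS, Finset.sum_empty, if_neg (fun h => hFS h.le)]

section Xi

variable {R : Type} [CommRing R] {X Y : Type} [Fintype X] [DecidableEq X]
  {px : X} {py : Y} [LinearOrder {x : X // x ≠ px}]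

theorem xi_add (T T' : (Mfun R X px).Nat (Mfun R Y py)) :
    xi R X Y px py (T + T') = xi R X Y px py T + xi R X Y px py T' := by
  simp only [xi, ← Finset.sum_add_distrib]
  refine Finset.sum_congr rfl fun E _ => Finset.sum_congr rfl fun F _ => ?_
  split_ifs
  · simp only [Submodule.coe_add, Pi.add_apply, LinearMap.add_apply, map_add, smul_add]
  · rw [add_zero]

theorem xi_smul (r : R) (T : (Mfun R X px).Nat (Mfun R Y py)) :
    xi R X Y px py (r • T) = r • xi R X Y px py T := by
  simp only [xi, Finset.smul_sum]
  refine Finset.sum_congr rfl fun E _ => Finset.sum_congr rfl fun F _ => ?_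
  split_ifs
  · simp only [Submodule.coe_smul, Pi.smul_apply, LinearMap.smul_apply, map_smul, smul_comm r]
  · rw [smul_zero]

variable (R X Y px py) in
noncomputable def xiₗ : (Mfun R X px).Nat (Mfun R Y py) →ₗ[R] (PFunB X Y px py →₀ R) where
  toFun := xi R X Y px py
  map_add' := xi_add
  map_smul' := xi_smul

end Xi

namespace PFunB

variable {X Y : Type} [Fintype X] {px : X} {py : Y}

/-- The class `[f]` of a pointed function in the free reduced module; the constant function
at the basepoint is the basepoint of the pointed set, so its class is `0`. -/
noncomputable def reducedClass (R : Type) [CommRing R] (f : X → Y) (hf : f px = py) :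
    PFunB X Y px py →₀ R :=
  if h : ∃ x, f x ≠ py then Finsupp.single ⟨f, hf, h⟩ 1 else 0

theorem reducedClass_val (R : Type) [CommRing R] (v : PFunB X Y px py) :
    reducedClass R v.1 v.2.1 = Finsupp.single v 1 := by
  rw [reducedClass, dif_pos v.2.2]
  rfl

noncomputable def support (v : PFunB X Y px py) : Finset {x : X // x ≠ px} :=
  Finset.univ.filter fun a => v.1 a ≠ py

theorem mem_support {v : PFunB X Y px py} {a : {x : X // x ≠ px}} :
    a ∈ v.support ↔ v.1 a ≠ py := by
  simp [support]

noncomputable def restrict (v : PFunB X Y px py) (F : Finset {x : X // x ≠ px}) : X → Y :=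
  fun x => if ∃ hx : x ≠ px, (⟨x, hx⟩ : {x : X // x ≠ px}) ∈ F then v.1 x else py

theorem restrict_apply_basepoint (v : PFunB X Y px py) (F : Finset {x : X // x ≠ px}) :
    v.restrict F px = py :=
  if_neg fun ⟨hx, _⟩ => hx rfl

theorem restrict_support (v : PFunB X Y px py) : v.restrict v.support = v.1 := by
  funext x
  by_cases hx : x = px
  · rw [hx, restrict_apply_basepoint, v.2.1]
  · by_cases hv : v.1 x = py
    · rw [restrict, if_neg fun ⟨_, h⟩ => mem_support.1 h hv, hv]
    · rw [restrict, if_pos ⟨hx, mem_support.2 hv⟩]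

theorem reducedClass_restrict_empty (R : Type) [CommRing R] (v : PFunB X Y px py) :
    reducedClass R (v.restrict ∅) (v.restrict_apply_basepoint ∅) = 0 :=
  dif_neg fun ⟨_, hx⟩ => hx (if_neg fun ⟨_, h⟩ => Finset.notMem_empty _ h)

end PFunB

section Epsilon

variable {R : Type} [CommRing R] {X Y : Type} [Fintype X] [DecidableEq X]
  {px : X} {py : Y} [LinearOrder {x : X // x ≠ px}]

variable (R) in
/-- `ε([v])ₛ([x₁ ∧ ⋯ ∧ xₛ]) = [v(x₁) ∧ ⋯ ∧ v(xₛ)]`, which is `0` in the reduced module as soon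
as some `v(xₜ)` is the basepoint. -/
noncomputable def smashMap (v : PFunB X Y px py) {s : ℕ} (x : Fin (s + 1) → {a : X // a ≠ px}) :
    (Mfun R Y py).obj s :=
  if h : ∀ t, v.1 (x t).1 ≠ py then
    Finsupp.single (fun t => (⟨v.1 (x t).1, h t⟩ : {y : Y // y ≠ py})) 1
  else 0

theorem smashMap_of_forall {v : PFunB X Y px py} {s : ℕ} {x : Fin (s + 1) → {a : X // a ≠ px}}
    (h : ∀ t, v.1 (x t).1 ≠ py) :
    smashMap R v x = Finsupp.single (fun t => (⟨v.1 (x t).1, h t⟩ : {y : Y // y ≠ py})) 1 :=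
  dif_pos h

theorem smashMap_of_not_forall {v : PFunB X Y px py} {s : ℕ} {x : Fin (s + 1) → {a : X // a ≠ px}}
    (h : ¬∀ t, v.1 (x t).1 ≠ py) : smashMap R v x = 0 :=
  dif_neg h

theorem forall_ne_basepoint_iff_subset_support (v : PFunB X Y px py)
    (E : Finset {x : X // x ≠ px}) (hE : E.Nonempty) :
    (∀ t, v.1 (E.orderIsoOfFin (card_eq X px E hE) t).1.1 ≠ py) ↔ E ⊆ v.support := by
  constructor
  · intro hv a ha
    simpa using PFunB.mem_support.2 (hv ((E.orderIsoOfFin (card_eq X px E hE)).symm ⟨a, ha⟩))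
  · exact fun hES t => PFunB.mem_support.1 (hES (E.orderIsoOfFin (card_eq X px E hE) t).2)

theorem Phi_single (E F : Finset {x : X // x ≠ px}) (hF : F.Nonempty) (hFE : F ⊆ E)
    (y : Fin (E.card - 1 + 1) → {y : Y // y ≠ py}) :
    Phi R X Y px py E F hF hFE (Finsupp.single y 1) =
      Finsupp.single (⟨phiFun X Y px py E F hF hFE y, phiFun_pointed X Y px py E F hF hFE y⟩ :
        PFunB X Y px py) 1 := by
  -- `erw`: `Phi` builds its basis elements as bare subtype terms, not syntactically in `PFunB`
  erw [Phi, Finsupp.lift_apply, Finsupp.sum_single_index (by rw [zero_smul]), one_smul]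
  rfl

theorem Phi_smashMap_kappa (v : PFunB X Y px py) (E F : Finset {x : X // x ≠ px})
    (hF : F.Nonempty) (hFE : F ⊆ E) :
    Phi R X Y px py E F hF hFE
        (smashMap R v fun t => (E.orderIsoOfFin (card_eq X px E (hF.mono hFE)) t).1) =
      if E ⊆ v.support then
        PFunB.reducedClass R (v.restrict F) (v.restrict_apply_basepoint F)
      else 0 := by
  have hv := forall_ne_basepoint_iff_subset_support v E (hF.mono hFE)
  by_cases hd : ∀ t, v.1 (E.orderIsoOfFin (card_eq X px E (hF.mono hFE)) t).1.1 ≠ py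
  · rw [smashMap_of_forall hd, if_pos (hv.1 hd), Phi_single]
    refine (PFunB.reducedClass_val R _).symm.trans ?_
    congr 1
    funext x
    simp only [phiFun, PFunB.restrict, OrderIso.apply_symm_apply]
    split_ifs <;> rfl
  · rw [smashMap_of_not_forall hd, if_neg (mt hv.2 hd), map_zero]

theorem xi_summand_epsilon_single
    (e : ((PFunB X Y px py) →₀ R) →ₗ[R] ((Mfun R X px).Nat (Mfun R Y py)))
    (he : ∀ (v : PFunB X Y px py) (s : ℕ) (x : Fin (s + 1) → {a : X // a ≠ px}),
      (e (Finsupp.single v 1)).1 s (Finsupp.single x 1) = smashMap R v x)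
    (v : PFunB X Y px py) (E F : Finset {x : X // x ≠ px}) :
    (if h : F.Nonempty ∧ F ⊆ E then
        ((-1 : ℤ) ^ (E.card - F.card)) • Phi R X Y px py E F h.1 h.2
          ((e (Finsupp.single v 1)).1 (E.card - 1) (kappa R X px E (h.1.mono h.2)))
      else 0) =
      if F ⊆ E ∧ E ⊆ v.support then
        ((-1 : ℤ) ^ (E.card - F.card)) •
          PFunB.reducedClass R (v.restrict F) (v.restrict_apply_basepoint F)
      else 0 := by
  by_cases hF : F.Nonempty
  · by_cases hFE : F ⊆ E
    · rw [dif_pos ⟨hF, hFE⟩, kappa, he, Phi_smashMap_kappa]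
      by_cases hES : E ⊆ v.support
      · rw [if_pos hES, if_pos ⟨hFE, hES⟩]
      · rw [if_neg hES, if_neg fun h => hES h.2, smul_zero]
    · rw [dif_neg fun h => hFE h.2, if_neg fun h => hFE h.1]
  · rw [dif_neg fun h => hF h.1, Finset.not_nonempty_iff_eq_empty.1 hF]
    simp only [PFunB.reducedClass_restrict_empty, smul_zero, ite_self]

theorem xi_epsilon_single
    (e : ((PFunB X Y px py) →₀ R) →ₗ[R] ((Mfun R X px).Nat (Mfun R Y py)))
    (he : ∀ (v : PFunB X Y px py) (s : ℕ) (x : Fin (s + 1) → {a : X // a ≠ px}),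
      (e (Finsupp.single v 1)).1 s (Finsupp.single x 1) = smashMap R v x)
    (v : PFunB X Y px py) :
    xi R X Y px py (e (Finsupp.single v 1)) = Finsupp.single v 1 := by
  set w : Finset {x : X // x ≠ px} → PFunB X Y px py →₀ R :=
    fun F => PFunB.reducedClass R (v.restrict F) (v.restrict_apply_basepoint F)
  calc xi R X Y px py (e (Finsupp.single v 1))
      = ∑ E, ∑ F, if F ⊆ E ∧ E ⊆ v.support then ((-1 : ℤ) ^ (E.card - F.card)) • w F else 0 :=
        Finset.sum_congr rfl fun E _ =>
          Finset.sum_congr rfl fun F _ => xi_summand_epsilon_single e he v E F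
    _ = ∑ F, (∑ E ∈ Finset.Icc F v.support, (-1 : ℤ) ^ (E.card - F.card)) • w F := by
        rw [Finset.sum_comm]
        refine Finset.sum_congr rfl fun F _ => ?_
        rw [Finset.sum_smul, ← Finset.filter_le_le_eq_Icc, Finset.sum_filter]
    _ = w v.support := by
        simp only [Finset.sum_Icc_neg_one_pow_card_sub, ite_smul, one_smul, zero_smul,
          Finset.sum_ite_eq', Finset.mem_univ, if_true]
    _ = Finsupp.single v 1 := by
        simp only [w, PFunB.restrict_support, PFunB.reducedClass_val]

end Epsilon

/-- from the proof of Theorem 0.6: `ξ ∘ ε = id` on the free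
reduced `R`-module on pointed functions `X → Y`, where
`ε([v])_s([x₁∧⋯∧x_s]) = [v(x₁)∧⋯∧v(x_s)]`. -/
theorem xi_comp_epsilon (R : Type) [CommRing R] (X Y : Type)
    [Fintype X] [DecidableEq X] (px : X) (py : Y)
    [LinearOrder {x : X // x ≠ px}]
    (e : ((PFunB X Y px py) →₀ R) →ₗ[R] ((Mfun R X px).Nat (Mfun R Y py)))
    (he : ∀ (v : PFunB X Y px py) (s : ℕ) (x : Fin (s + 1) → {a : X // a ≠ px}),
      (e (Finsupp.single v 1)).1 s (Finsupp.single x 1) =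
        if h : ∀ t, v.1 (x t).1 ≠ py then
          Finsupp.single (fun t => (⟨v.1 (x t).1, h t⟩ : {y : Y // y ≠ py})) 1
        else 0) :
    ∀ z : (PFunB X Y px py) →₀ R, xi R X Y px py (e z) = z := by
  have hcomp : xiₗ R X Y px py ∘ₗ e = LinearMap.id :=
    Finsupp.lhom_ext' fun v => LinearMap.ext_ring (xi_epsilon_single e he v)
  exact LinearMap.congr_fun hcomp
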